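/- arXiv:2007.08274 — 4 statements merged into one kernel-verified Lean document; each statement's English description precedes it below -/
import Mathlib

section
/- Let (D_i)_{i≥1} be independent identically distributed ℕ-valued random variables whose common probability mass function d(k) := P(D_1 = k) satisfies: d(k) > 0 for all sufficiently large k; d(n−1)/d(n) → 1 as n → ∞; and (1/d(n)) ∑_{k=0}^{n} d(k) d(n−k) → 2 as n → ∞ (i.e., the probability generating function of D_1 is subexponential with radius of convergence 1). Fix an integer p ≥ 2 and set S_p := D_1 + ⋯ + D_p and M_p := max{D_1, …, D_p}. Then, conditional on S_p = n, the maximum satisfies M_p = n + O_p(1) as n → ∞; precisely: for every ε > 0 there exist K ∈ ℕ and n_0 ∈ ℕ such that for all n ≥ n_0, P(S_p = n) > 0 and P(M_p ≤ n − K | S_p = n) ≤ ε. -/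
/-!
Write `d^{*j}` for the `j`-fold convolution power of `d`, the law of `S_j`. Subexponentiality
upgrades to `d^{*j}(n) / d(n) → j`, by induction on `j`: split a convolution `(d * g)(n)` into
the terms with `k < K`, with `n - k < K`, and the middle range `K ≤ k ≤ n - K`. Long-tailedness
(`d(n - k) / d(n) → 1` for fixed `k`) makes the two ends converge, while the middle range is
dominated by `∑_{K ≤ k ≤ n-K} d(k) d(n-k) / d(n) → 2 - 2 ∑_{k<K} d(k)`, which is small for large
`K`.

If `M_p ≤ n - K` and `S_p = n ≥ pK`, some `D_i` lies in `[K, n - K]`, so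
`P(M_p ≤ n - K, S_p = n) ≤ p ∑_{K ≤ k ≤ n-K} d(k) d^{*(p-1)}(n-k) ≤ p² ∑_{K ≤ k ≤ n-K} d(k) d(n-k)`,
which is at most `ε d(n)` for suitable `K` and all large `n`, whereas `P(S_p = n) ≥ d(n)`.
-/

open MeasureTheory Filter Finset Topology

theorem tendsto_of_forall_eventually_dist_le {ι κ α : Type*} [PseudoMetricSpace α]
    {l : Filter ι} {l' : Filter κ} [l'.NeBot] {f : ι → α} {a : κ → ι → α} {b : κ → α} {x : α}
    (ha : ∀ K, Tendsto (a K) l (𝓝 (b K))) (hb : Tendsto b l' (𝓝 x))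
    (hf : ∀ δ > 0, ∀ᶠ K in l', ∀ᶠ n in l, dist (f n) (a K n) ≤ δ) :
    Tendsto f l (𝓝 x) := by
  refine Metric.tendsto_nhds.2 fun ε hε => ?_
  obtain ⟨K, hfK, hbK⟩ :=
    ((hf (ε / 3) (by positivity)).and (Metric.tendsto_nhds.1 hb (ε / 3) (by positivity))).exists
  filter_upwards [hfK, Metric.tendsto_nhds.1 (ha K) (ε / 3) (by positivity)] with n h₁ h₂
  calc dist (f n) x ≤ dist (f n) (a K n) + dist (a K n) (b K) + dist (b K) x := dist_triangle4 ..
    _ < ε := by linarith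

def natConv (u v : ℕ → ℝ) (n : ℕ) : ℝ := ∑ k ∈ range (n + 1), u k * v (n - k)

def natConvPow (d : ℕ → ℝ) : ℕ → ℕ → ℝ
  | 0 => Pi.single 0 1
  | j + 1 => natConv d (natConvPow d j)

theorem HasSum.natConv {u v : ℕ → ℝ} {a b : ℝ} (hu : HasSum u a) (hv : HasSum v b) :
    HasSum (natConv u v) (a * b) := by
  have h := hasSum_sum_range_mul_of_summable_norm hu.summable.norm hv.summable.norm
  rwa [hu.tsum_eq, hv.tsum_eq] at h

theorem natConv_split (u v : ℕ → ℝ) {K n : ℕ} (hn : 2 * K ≤ n) :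
    natConv u v n = ∑ k ∈ range K, u k * v (n - k) + ∑ k ∈ Icc K (n - K), u k * v (n - k)
      + ∑ j ∈ range K, v j * u (n - j) := by
  have hhigh : ∑ j ∈ range K, v j * u (n - j) = ∑ k ∈ Ico (n - K + 1) (n + 1), u k * v (n - k) := by
    have h := sum_Ico_reflect (fun k => u k * v (n - k)) 0 (by omega : K ≤ n + 1)
    rw [show n + 1 - K = n - K + 1 by omega, Nat.sub_zero] at h
    rw [← h, range_eq_Ico]
    refine sum_congr rfl fun j hj => ?_
    rw [mem_Ico] at hj
    rw [Nat.sub_sub_self (by omega), mul_comm]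
  rw [natConv, hhigh, ← Ico_add_one_right_eq_Icc, range_eq_Ico, range_eq_Ico,
    sum_Ico_consecutive _ (Nat.zero_le K) (by omega : K ≤ n - K + 1),
    sum_Ico_consecutive _ (Nat.zero_le _) (by omega : n - K + 1 ≤ n + 1)]

theorem natConv_nonneg {u v : ℕ → ℝ} (hu : ∀ k, 0 ≤ u k) (hv : ∀ k, 0 ≤ v k) (n : ℕ) :
    0 ≤ natConv u v n :=
  sum_nonneg fun k _ => mul_nonneg (hu k) (hv _)

theorem natConvPow_nonneg {d : ℕ → ℝ} (hd0 : ∀ k, 0 ≤ d k) (j n : ℕ) : 0 ≤ natConvPow d j n := by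
  induction j generalizing n with
  | zero => by_cases hn : n = 0 <;> simp [natConvPow, hn]
  | succ j ih => exact natConv_nonneg hd0 ih n

theorem hasSum_natConvPow {d : ℕ → ℝ} (hd : HasSum d 1) (j : ℕ) : HasSum (natConvPow d j) 1 := by
  induction j with
  | zero => exact hasSum_pi_single 0 1
  | succ j ih => simpa [natConvPow] using hd.natConv ih

section Subexponential

variable {d g : ℕ → ℝ}

theorem tendsto_div_self_of_eventually_pos (hpos : ∀ᶠ n in atTop, 0 < d n) :
    Tendsto (fun n => d n / d n) atTop (𝓝 1) :=
  tendsto_const_nhds.congr' (hpos.mono fun _ hn => (div_self hn.ne').symm)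

theorem eventually_le_mul_of_tendsto_div (hpos : ∀ᶠ n in atTop, 0 < d n) {c C : ℝ}
    (hg : Tendsto (fun n => g n / d n) atTop (𝓝 c)) (hC : c < C) :
    ∀ᶠ n in atTop, g n ≤ C * d n := by
  filter_upwards [hg.eventually (gt_mem_nhds hC), hpos] with n h hn
  exact (div_le_iff₀ hn).1 h.le

theorem tendsto_comp_sub_div (hpos : ∀ᶠ n in atTop, 0 < d n)
    (hratio : Tendsto (fun n => d (n - 1) / d n) atTop (𝓝 1)) {c : ℝ}
    (hg : Tendsto (fun n => g n / d n) atTop (𝓝 c)) (k : ℕ) :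
    Tendsto (fun n => g (n - k) / d n) atTop (𝓝 c) := by
  have shift_one : ∀ f : ℕ → ℝ, Tendsto (fun n => f n / d n) atTop (𝓝 c) →
      Tendsto (fun n => f (n - 1) / d n) atTop (𝓝 c) := by
    intro f hf
    have h := (hf.comp (tendsto_sub_atTop_nat 1)).mul hratio
    rw [mul_one] at h
    refine h.congr' ?_
    filter_upwards [(tendsto_sub_atTop_nat 1).eventually hpos] with n hn
    exact div_mul_div_cancel₀ hn.ne'
  induction k with
  | zero => simpa using hg
  | succ k ih => simpa [Nat.sub_sub, add_comm 1 k] using shift_one _ ih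

theorem tendsto_sum_range_mul_div (hpos : ∀ᶠ n in atTop, 0 < d n)
    (hratio : Tendsto (fun n => d (n - 1) / d n) atTop (𝓝 1)) (u : ℕ → ℝ) {c : ℝ}
    (hg : Tendsto (fun n => g n / d n) atTop (𝓝 c)) (K : ℕ) :
    Tendsto (fun n => (∑ k ∈ range K, u k * g (n - k)) / d n) atTop
      (𝓝 ((∑ k ∈ range K, u k) * c)) := by
  simp_rw [sum_div, mul_div_assoc, sum_mul]
  exact tendsto_finsetSum _ fun k _ => (tendsto_comp_sub_div hpos hratio hg k).const_mul (u k)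

theorem tendsto_sum_Icc_mul_div (hpos : ∀ᶠ n in atTop, 0 < d n)
    (hratio : Tendsto (fun n => d (n - 1) / d n) atTop (𝓝 1))
    (hconv : Tendsto (fun n => natConv d d n / d n) atTop (𝓝 2)) (K : ℕ) :
    Tendsto (fun n => (∑ k ∈ Icc K (n - K), d k * d (n - k)) / d n) atTop
      (𝓝 (2 - 2 * ∑ k ∈ range K, d k)) := by
  have hend := tendsto_sum_range_mul_div hpos hratio d (tendsto_div_self_of_eventually_pos hpos) K
  rw [show 2 - 2 * ∑ k ∈ range K, d k
    = 2 - (∑ k ∈ range K, d k) * 1 - (∑ k ∈ range K, d k) * 1 by ring]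
  refine ((hconv.sub hend).sub hend).congr' ?_
  filter_upwards [eventually_ge_atTop (2 * K)] with n hn
  rw [natConv_split d d hn]
  ring

theorem eventually_mul_sum_Icc_div_lt (hd : HasSum d 1) (hpos : ∀ᶠ n in atTop, 0 < d n)
    (hratio : Tendsto (fun n => d (n - 1) / d n) atTop (𝓝 1))
    (hconv : Tendsto (fun n => natConv d d n / d n) atTop (𝓝 2)) (C : ℝ) {δ : ℝ} (hδ : 0 < δ) :
    ∀ᶠ K in atTop, ∀ᶠ n in atTop, C * ((∑ k ∈ Icc K (n - K), d k * d (n - k)) / d n) < δ := by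
  have hlim : Tendsto (fun K => C * (2 - 2 * ∑ k ∈ range K, d k)) atTop (𝓝 0) := by
    simpa using ((hd.tendsto_sum_nat.const_mul 2).const_sub 2).const_mul C
  filter_upwards [hlim.eventually (gt_mem_nhds hδ)] with K hK
  exact ((tendsto_sum_Icc_mul_div hpos hratio hconv K).const_mul C).eventually (gt_mem_nhds hK)

theorem sum_Icc_mul_le (hd0 : ∀ k, 0 ≤ d k) {C : ℝ} {K : ℕ} (hg : ∀ m ≥ K, g m ≤ C * d m)
    (n : ℕ) :
    ∑ k ∈ Icc K (n - K), d k * g (n - k) ≤ C * ∑ k ∈ Icc K (n - K), d k * d (n - k) := by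
  rw [mul_sum]
  refine sum_le_sum fun k hk => ?_
  rw [mem_Icc] at hk
  calc d k * g (n - k) ≤ d k * (C * d (n - k)) :=
        mul_le_mul_of_nonneg_left (hg _ (by omega)) (hd0 k)
    _ = C * (d k * d (n - k)) := by ring

theorem eventually_sum_Icc_mul_div_le (hd : HasSum d 1) (hd0 : ∀ k, 0 ≤ d k)
    (hpos : ∀ᶠ n in atTop, 0 < d n) (hratio : Tendsto (fun n => d (n - 1) / d n) atTop (𝓝 1))
    (hconv : Tendsto (fun n => natConv d d n / d n) atTop (𝓝 2)) {C : ℝ}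
    (hg : ∀ᶠ m in atTop, g m ≤ C * d m) {δ : ℝ} (hδ : 0 < δ) :
    ∀ᶠ K in atTop, ∀ᶠ n in atTop, (∑ k ∈ Icc K (n - K), d k * g (n - k)) / d n ≤ δ := by
  obtain ⟨M, hM⟩ := eventually_atTop.1 hg
  filter_upwards [eventually_ge_atTop M,
    eventually_mul_sum_Icc_div_lt hd hpos hratio hconv C hδ] with K hKM hK
  filter_upwards [hK, hpos] with n hn hdn
  calc (∑ k ∈ Icc K (n - K), d k * g (n - k)) / d n
      ≤ (C * ∑ k ∈ Icc K (n - K), d k * d (n - k)) / d n :=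
        div_le_div_of_nonneg_right (sum_Icc_mul_le hd0 (fun m hm => hM m (hKM.trans hm)) n) hdn.le
    _ = C * ((∑ k ∈ Icc K (n - K), d k * d (n - k)) / d n) := mul_div_assoc _ _ _
    _ ≤ δ := hn.le

theorem tendsto_natConv_div (hd : HasSum d 1) (hd0 : ∀ k, 0 ≤ d k)
    (hpos : ∀ᶠ n in atTop, 0 < d n) (hratio : Tendsto (fun n => d (n - 1) / d n) atTop (𝓝 1))
    (hconv : Tendsto (fun n => natConv d d n / d n) atTop (𝓝 2))
    (hg0 : ∀ k, 0 ≤ g k) {s c : ℝ} (hgs : HasSum g s)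
    (hg : Tendsto (fun n => g n / d n) atTop (𝓝 c)) :
    Tendsto (fun n => natConv d g n / d n) atTop (𝓝 (c + s)) := by
  have hend := fun K => (tendsto_sum_range_mul_div hpos hratio d hg K).add
    (tendsto_sum_range_mul_div hpos hratio g (tendsto_div_self_of_eventually_pos hpos) K)
  refine tendsto_of_forall_eventually_dist_le (l' := atTop) hend ?_ fun δ hδ => ?_
  · simpa using (hd.tendsto_sum_nat.mul_const c).add (hgs.tendsto_sum_nat.mul_const 1)
  filter_upwards [eventually_sum_Icc_mul_div_le hd hd0 hpos hratio hconv
    (eventually_le_mul_of_tendsto_div hpos hg (lt_add_one c)) hδ] with K hK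
  filter_upwards [hK, hpos, eventually_ge_atTop (2 * K)] with n hn hdn hnK
  have hmid : 0 ≤ (∑ k ∈ Icc K (n - K), d k * g (n - k)) / d n :=
    div_nonneg (sum_nonneg fun k _ => mul_nonneg (hd0 k) (hg0 _)) hdn.le
  rw [Real.dist_eq, natConv_split d g hnK, add_div, add_div, add_sub_add_comm, sub_self,
    add_zero, add_sub_cancel_left, abs_of_nonneg hmid]
  exact hn

theorem tendsto_natConvPow_div (hd : HasSum d 1) (hd0 : ∀ k, 0 ≤ d k)
    (hpos : ∀ᶠ n in atTop, 0 < d n) (hratio : Tendsto (fun n => d (n - 1) / d n) atTop (𝓝 1))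
    (hconv : Tendsto (fun n => natConv d d n / d n) atTop (𝓝 2)) (j : ℕ) :
    Tendsto (fun n => natConvPow d j n / d n) atTop (𝓝 j) := by
  induction j with
  | zero =>
    refine tendsto_const_nhds.congr' ?_
    filter_upwards [eventually_ne_atTop 0] with n hn
    simp [natConvPow, hn]
  | succ j ih =>
    simpa [natConvPow] using tendsto_natConv_div hd hd0 hpos hratio hconv (natConvPow_nonneg hd0 j)
      (hasSum_natConvPow hd j) ih

end Subexponential

section IndependentSums

variable {Ω : Type*} [MeasurableSpace Ω] {μ : Measure Ω} {D : ℕ → Ω → ℕ} {d : ℕ → ℝ}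

theorem measureReal_setOf_eq_of_map_eq {X Y : Ω → ℕ} (hX : Measurable X) (hY : Measurable Y)
    (h : μ.map X = μ.map Y) (k : ℕ) : μ.real {ω | X ω = k} = μ.real {ω | Y ω = k} :=
  congrArg ENNReal.toReal ((ProbabilityTheory.IdentDistrib.mk hX.aemeasurable hY.aemeasurable
    h).measure_mem_eq (measurableSet_singleton k))

theorem hasSum_measureReal_setOf_eq [IsProbabilityMeasure μ] {X : Ω → ℕ} (hX : Measurable X) :
    HasSum (fun k => μ.real {ω | X ω = k}) 1 := by
  have h : ∑' k, μ {ω | X ω = k} = 1 := by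
    rw [← measure_iUnion (f := fun k => {ω | X ω = k})
      (fun i j hij => Set.disjoint_left.2 fun ω hi hj => hij (hi.symm.trans hj))
      fun k => hX (measurableSet_singleton k), Set.iUnion_eq_univ_iff.2 fun ω => ⟨X ω, rfl⟩, measure_univ]
  have hs := ENNReal.summable_toReal (h ▸ ENNReal.one_ne_top)
  simpa [measureReal_def, ← ENNReal.tsum_toReal_eq (fun k => measure_ne_top μ _), h]
    using hs.hasSum

theorem measureReal_mem_add_sum_eq [IsProbabilityMeasure μ] (hmeas : ∀ i, Measurable (D i))
    (hindep : ProbabilityTheory.iIndepFun D μ) (hd : ∀ i k, μ.real {ω | D i ω = k} = d k)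
    {a : ℕ} {s : Finset ℕ} (ha : a ∉ s) {t : Finset ℕ} {n : ℕ} (ht : ∀ k ∈ t, k ≤ n) :
    μ.real {ω | D a ω ∈ t ∧ D a ω + ∑ i ∈ s, D i ω = n}
      = ∑ k ∈ t, d k * μ.real {ω | ∑ i ∈ s, D i ω = n - k} := by
  have hS : Measurable fun ω => ∑ i ∈ s, D i ω := Finset.measurable_sum s fun i _ => hmeas i
  have hind : ProbabilityTheory.IndepFun (fun ω => ∑ i ∈ s, D i ω) (D a) μ := by
    simpa [Finset.sum_fn] using hindep.indepFun_finsetSum_of_notMem hmeas ha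
  have hset : {ω | D a ω ∈ t ∧ D a ω + ∑ i ∈ s, D i ω = n}
      = ⋃ k ∈ t, ((fun ω => ∑ i ∈ s, D i ω) ⁻¹' {n - k} ∩ D a ⁻¹' {k}) := by
    ext ω
    simp only [Set.mem_ofPred_eq, Set.mem_iUnion, Set.mem_inter_iff, Set.mem_preimage,
      Set.mem_singleton_iff, exists_prop]
    constructor
    · rintro ⟨hk, hsum⟩
      exact ⟨D a ω, hk, by omega, rfl⟩
    · rintro ⟨k, hk, hsum, rfl⟩
      exact ⟨hk, by have := ht _ hk; omega⟩
  rw [hset, measureReal_biUnion_finset]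
  · refine sum_congr rfl fun k _ => ?_
    rw [measureReal_def, hind.measure_inter_preimage_eq_mul _ _ (measurableSet_singleton _)
      (measurableSet_singleton _), ENNReal.toReal_mul, mul_comm, ← measureReal_def,
      ← measureReal_def]
    exact congrArg (· * _) (hd a k)
  · exact fun k _ l _ hkl => Set.disjoint_left.2 fun ω hk hl => hkl (hk.2.symm.trans hl.2)
  · exact fun k _ => (hS (measurableSet_singleton _)).inter (hmeas a (measurableSet_singleton _))

theorem measureReal_sum_eq_natConvPow [IsProbabilityMeasure μ] (hmeas : ∀ i, Measurable (D i))
    (hindep : ProbabilityTheory.iIndepFun D μ) (hd : ∀ i k, μ.real {ω | D i ω = k} = d k)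
    (s : Finset ℕ) (n : ℕ) :
    μ.real {ω | ∑ i ∈ s, D i ω = n} = natConvPow d s.card n := by
  induction s using Finset.induction_on generalizing n with
  | empty => by_cases hn : n = 0 <;> simp [natConvPow, hn, eq_comm]
  | insert a s ha ih =>
    rw [card_insert_of_notMem ha, natConvPow, natConv]
    simp_rw [← ih]
    rw [← measureReal_mem_add_sum_eq hmeas hindep hd ha
      fun k hk => Nat.lt_succ_iff.1 (mem_range.1 hk)]
    congr with ω
    simp only [sum_insert ha, mem_range]
    omega

theorem measureReal_sup_le_inter_sum_eq_le [IsProbabilityMeasure μ]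
    (hmeas : ∀ i, Measurable (D i))
    (hindep : ProbabilityTheory.iIndepFun D μ) (hd : ∀ i k, μ.real {ω | D i ω = k} = d k)
    {p K n : ℕ} (hp : 0 < p) (hn : p * K ≤ n) :
    μ.real ({ω | (range p).sup (fun i => D i ω) ≤ n - K} ∩ {ω | ∑ i ∈ range p, D i ω = n})
      ≤ p * ∑ k ∈ Icc K (n - K), d k * natConvPow d (p - 1) (n - k) := by
  have hsub : {ω | (range p).sup (fun i => D i ω) ≤ n - K} ∩ {ω | ∑ i ∈ range p, D i ω = n}
      ⊆ ⋃ i ∈ range p,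
        {ω | D i ω ∈ Icc K (n - K) ∧ D i ω + ∑ j ∈ (range p).erase i, D j ω = n} := by
    rintro ω ⟨hmax, hsum⟩
    simp only [Set.mem_ofPred_eq] at hmax hsum
    obtain ⟨i, hi, hKi⟩ := exists_le_of_sum_le (f := fun _ => K) (g := fun i => D i ω)
      (nonempty_range_iff.2 hp.ne') (by simpa [hsum, mul_comm] using hn)
    refine Set.mem_biUnion hi ⟨mem_Icc.2 ⟨hKi, (le_sup (f := fun i => D i ω) hi).trans hmax⟩, ?_⟩
    exact (add_sum_erase (range p) (fun j => D j ω) hi).trans hsum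
  calc _ ≤ μ.real (⋃ i ∈ range p,
        {ω | D i ω ∈ Icc K (n - K) ∧ D i ω + ∑ j ∈ (range p).erase i, D j ω = n}) :=
        measureReal_mono hsub (measure_ne_top μ _)
    _ ≤ ∑ i ∈ range p,
        μ.real {ω | D i ω ∈ Icc K (n - K) ∧ D i ω + ∑ j ∈ (range p).erase i, D j ω = n} :=
        measureReal_biUnion_finset_le _ _
    _ = ∑ _i ∈ range p, ∑ k ∈ Icc K (n - K), d k * natConvPow d (p - 1) (n - k) := by
        refine sum_congr rfl fun i hi => ?_
        rw [measureReal_mem_add_sum_eq hmeas hindep hd (notMem_erase i _)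
          fun k hk => (mem_Icc.1 hk).2.trans (Nat.sub_le n K)]
        simp_rw [measureReal_sum_eq_natConvPow hmeas hindep hd, card_erase_of_mem hi, card_range]
    _ = _ := by rw [sum_const, card_range, nsmul_eq_mul]

end IndependentSums

/-- Single big jump principle: for iid `ℕ`-valued random variables
`D_1, D_2, …` whose common pmf `d` satisfies the subexponentiality conditions
(`d` eventually positive, `d(n-1)/d(n) → 1`, `(1/d(n)) ∑_{k=0}^n d(k)d(n-k) → 2`),
and fixed `p ≥ 2`, conditionally on `S_p = n` the maximum `M_p` equals `n + O_p(1)`: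
for every `ε > 0` there are `K, n₀` such that for all `n ≥ n₀`, `P(S_p = n) > 0` and
`P(M_p ≤ n - K ∣ S_p = n) ≤ ε`. -/
theorem statement4
    {Ω : Type*} [MeasurableSpace Ω] (μ : Measure Ω) [IsProbabilityMeasure μ]
    (D : ℕ → Ω → ℕ)
    (hmeas : ∀ i, Measurable (D i))
    (hindep : ProbabilityTheory.iIndepFun D μ)
    (hident : ∀ i, Measure.map (D i) μ = Measure.map (D 0) μ)
    (d : ℕ → ℝ) (hd : ∀ k, d k = (μ {ω | D 0 ω = k}).toReal)
    (hpos : ∃ K, ∀ k, K ≤ k → 0 < d k)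
    (hratio : Filter.Tendsto (fun n => d (n - 1) / d n) Filter.atTop (nhds 1))
    (hconv : Filter.Tendsto (fun n => (∑ k ∈ Finset.range (n + 1), d k * d (n - k)) / d n)
      Filter.atTop (nhds 2))
    (p : ℕ) (hp : 2 ≤ p) :
    ∀ ε : ℝ, 0 < ε → ∃ K n₀ : ℕ, ∀ n : ℕ, n₀ ≤ n →
      0 < μ {ω | ∑ i ∈ Finset.range p, D i ω = n} ∧
      (μ ({ω | (Finset.range p).sup (fun i => D i ω) ≤ n - K} ∩
            {ω | ∑ i ∈ Finset.range p, D i ω = n})).toReal /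
        (μ {ω | ∑ i ∈ Finset.range p, D i ω = n}).toReal ≤ ε := by
  intro ε hε
  have hpos : ∀ᶠ k in atTop, 0 < d k := eventually_atTop.2 hpos
  have hlaw : ∀ i k, μ.real {ω | D i ω = k} = d k := fun i k =>
    (measureReal_setOf_eq_of_map_eq (hmeas i) (hmeas 0) (hident i) k).trans (hd k).symm
  have hd0 : ∀ k, 0 ≤ d k := fun k => hlaw 0 k ▸ measureReal_nonneg
  have hdsum : HasSum d 1 := by simpa [hlaw 0] using hasSum_measureReal_setOf_eq (μ := μ) (hmeas 0)
  have hlim := tendsto_natConvPow_div hdsum hd0 hpos hratio hconv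
  have hbound : ∀ᶠ m in atTop, natConvPow d (p - 1) m ≤ p * d m :=
    eventually_le_mul_of_tendsto_div hpos (hlim (p - 1)) (Nat.cast_lt.2 (by omega))
  obtain ⟨K, hK⟩ := (eventually_sum_Icc_mul_div_le hdsum hd0 hpos hratio hconv hbound
    (by positivity : 0 < ε / p)).exists
  obtain ⟨n₀, hn₀⟩ := eventually_atTop.1 (((hK.and (eventually_ge_atTop (p * K))).and hpos).and
    ((hlim p).eventually (lt_mem_nhds (Nat.one_lt_cast.2 (by omega)))))
  refine ⟨K, n₀, fun n hn => ?_⟩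
  obtain ⟨⟨⟨hmid, hpK⟩, hdn⟩, hSn⟩ := hn₀ n hn
  have hlaw_sum : μ.real {ω | ∑ i ∈ range p, D i ω = n} = natConvPow d p n := by
    simpa using measureReal_sum_eq_natConvPow hmeas hindep hlaw (range p) n
  have hdS : d n < natConvPow d p n := (one_lt_div hdn).1 hSn
  have hS_pos : 0 < μ.real {ω | ∑ i ∈ range p, D i ω = n} := hlaw_sum ▸ hdn.trans hdS
  refine ⟨(ENNReal.toReal_pos_iff.1 hS_pos).1, ?_⟩
  rw [← measureReal_def, ← measureReal_def, hlaw_sum]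
  have hnum := measureReal_sup_le_inter_sum_eq_le hmeas hindep hlaw (by omega : 0 < p) hpK
  calc _ ≤ (p * ∑ k ∈ Icc K (n - K), d k * natConvPow d (p - 1) (n - k)) / d n :=
        div_le_div₀ (measureReal_nonneg.trans hnum) hnum hdn hdS.le
    _ = p * ((∑ k ∈ Icc K (n - K), d k * natConvPow d (p - 1) (n - k)) / d n) := mul_div_assoc ..
    _ ≤ p * (ε / p) := by gcongr
    _ = ε := mul_div_cancel₀ _ (by positivity)
end

section
/- Let (c_k)_{k≥1} be nonnegative real numbers with c_0 := 0, and suppose the power series C(x) = ∑_{k≥1} c_k x^k has radius of convergence ρ with 0 < ρ < 1 and C(ρ) = ∑_{k≥1} c_k ρ^k < ∞. Define g_n := [x^n] exp( ∑_{j≥1} (1/j) ∑_{k≥1} c_k x^{jk} ), the n-th coefficient of the formal exponential (well defined since the argument has zero constant term); all g_n are nonnegative. Then: (a) the series ∑_{j≥1} C(ρ^j)/j converges; (b) ∑_{n≥0} g_n ρ^n converges; and (c) for every r > ρ the series ∑_{n≥0} g_n r^n diverges. In other words, the power series G(x) = ∑_n g_n x^n has radius of convergence ρ and G(ρ) < ∞.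 -/
open scoped ENNReal NNReal BigOperators
open Filter

/-- `Ct c z = ∑_{k≥1} c_k z^k` (the `k = 0` term vanishes since `c 0 = 0`). -/
noncomputable def Ct (c : ℕ → ℝ) (z : ℝ) : ℝ := ∑' k : ℕ, c k * z ^ k

/-- The one-variable series `H(x) = ∑_{j≥1} (1/j) ∑_{k≥1} c_k x^{jk}`; its coefficient of
`x^a` is `∑_{j ∣ a, j ≥ 1, a/j ≥ 1} c_{a/j} / j = ∑_{j ∈ divisors a} c_{a/j} / j`. -/
noncomputable def sH (c : ℕ → ℝ) : PowerSeries ℝ :=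
  PowerSeries.mk fun a => ∑ j ∈ a.divisors, c (a / j) / (j : ℝ)

/-- `gone c n = [x^n] exp(H(x))`, via the formal exponential: `∑_{p=0}^n (1/p!) [x^n] H^p`. -/
noncomputable def gone (c : ℕ → ℝ) (n : ℕ) : ℝ :=
  ∑ p ∈ Finset.range (n + 1), (1 / (Nat.factorial p) : ℝ) *
    PowerSeries.coeff (R := ℝ) n ((sH c) ^ p)

/-! All coefficients are nonnegative, so all series may be rearranged freely. The double series
`∑_{j≥1} ∑_k c_k ρ^{jk} / j` is dominated termwise by `∑_j ρ^{j-1} · ∑_k c_k ρ^k` (as `c_0 = 0`),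
which gives (a) and, after regrouping by `n = jk`, the value `H(ρ) < ∞`. By the Cauchy product the
coefficients of `H^p` sum at `ρ` to `H(ρ)^p`, so the partial sums of `∑ g_n ρ^n` are bounded by
`exp H(ρ)`. Finally `g_n ≥ [x^n] H ≥ c_n`, so `∑ g_n r^n` diverges wherever `∑ c_n r^n` does. -/

namespace PowerSeries

variable {f g : PowerSeries ℝ} {ρ A B : ℝ}

theorem coeff_mul_nonneg (hf : ∀ n, 0 ≤ coeff n f) (hg : ∀ n, 0 ≤ coeff n g) (n : ℕ) :
    0 ≤ coeff n (f * g) := by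
  rw [coeff_mul]
  exact Finset.sum_nonneg fun kl _ => mul_nonneg (hf kl.1) (hg kl.2)

theorem coeff_pow_nonneg (hf : ∀ n, 0 ≤ coeff n f) (p n : ℕ) : 0 ≤ coeff n (f ^ p) := by
  induction p generalizing n with
  | zero => rw [pow_zero, coeff_one]; split_ifs <;> norm_num
  | succ p ih => rw [pow_succ]; exact coeff_mul_nonneg ih hf n

theorem hasSum_coeff_mul_mul_pow (hf : ∀ n, 0 ≤ coeff n f) (hg : ∀ n, 0 ≤ coeff n g)
    (hρ : 0 ≤ ρ) (hfA : HasSum (fun n => coeff n f * ρ ^ n) A)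
    (hgB : HasSum (fun n => coeff n g * ρ ^ n) B) :
    HasSum (fun n => coeff n (f * g) * ρ ^ n) (A * B) := by
  have hterm : (fun n => coeff n (f * g) * ρ ^ n) = fun n =>
      ∑ kl ∈ Finset.HasAntidiagonal.antidiagonal n,
        (coeff kl.1 f * ρ ^ kl.1) * (coeff kl.2 g * ρ ^ kl.2) := by
    funext n
    rw [coeff_mul, Finset.sum_mul]
    refine Finset.sum_congr rfl fun kl hkl => ?_
    rw [← Finset.HasAntidiagonal.mem_antidiagonal.1 hkl, pow_add]
    ring
  have hprod := hfA.summable.mul_of_nonneg hgB.summable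
    (fun n => mul_nonneg (hf n) (pow_nonneg hρ n)) (fun n => mul_nonneg (hg n) (pow_nonneg hρ n))
  rw [hterm, ← hfA.tsum_eq, ← hgB.tsum_eq,
    Summable.tsum_mul_tsum_eq_tsum_sum_antidiagonal (f := fun n => coeff n f * ρ ^ n)
      (g := fun n => coeff n g * ρ ^ n) hfA.summable hgB.summable hprod]
  exact (summable_sum_mul_antidiagonal_of_summable_mul (f := fun n => coeff n f * ρ ^ n)
    (g := fun n => coeff n g * ρ ^ n) hprod).hasSum

theorem hasSum_coeff_pow_mul_pow (hf : ∀ n, 0 ≤ coeff n f) (hρ : 0 ≤ ρ)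
    (hfA : HasSum (fun n => coeff n f * ρ ^ n) A) (p : ℕ) :
    HasSum (fun n => coeff n (f ^ p) * ρ ^ n) (A ^ p) := by
  induction p with
  | zero =>
    convert hasSum_ite_eq 0 (1 : ℝ) using 1
    · funext n
      rw [pow_zero, coeff_one]
      split_ifs with hn <;> simp [hn]
    · rw [pow_zero]
  | succ p ih =>
    rw [pow_succ, pow_succ]
    exact hasSum_coeff_mul_mul_pow (coeff_pow_nonneg hf p) hf hρ ih hfA

theorem summable_coeff_exp_mul_pow (hf : ∀ n, 0 ≤ coeff n f) (hρ : 0 ≤ ρ)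
    (hfA : HasSum (fun n => coeff n f * ρ ^ n) A) :
    Summable fun n =>
      (∑ p ∈ Finset.range (n + 1), (1 / (Nat.factorial p) : ℝ) * coeff n (f ^ p)) * ρ ^ n := by
  have hA : 0 ≤ A := hfA.nonneg fun n => mul_nonneg (hf n) (pow_nonneg hρ n)
  have hterm : ∀ p n, 0 ≤ (1 / (Nat.factorial p) : ℝ) * (coeff n (f ^ p) * ρ ^ n) :=
    fun p n => mul_nonneg (by positivity)
      (mul_nonneg (coeff_pow_nonneg hf p n) (pow_nonneg hρ n))
  refine summable_of_sum_range_le (c := Real.exp A)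
    (fun n => mul_nonneg (Finset.sum_nonneg fun p _ =>
      mul_nonneg (by positivity) (coeff_pow_nonneg hf p n)) (pow_nonneg hρ n)) fun N => ?_
  calc ∑ n ∈ Finset.range N,
        (∑ p ∈ Finset.range (n + 1), (1 / (Nat.factorial p) : ℝ) * coeff n (f ^ p)) * ρ ^ n
      ≤ ∑ n ∈ Finset.range N, ∑ p ∈ Finset.range N,
          (1 / (Nat.factorial p) : ℝ) * (coeff n (f ^ p) * ρ ^ n) := by
        refine Finset.sum_le_sum fun n hn => ?_
        simp_rw [Finset.sum_mul, mul_assoc]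
        exact Finset.sum_le_sum_of_subset_of_nonneg
          (Finset.range_subset_range.2 (Finset.mem_range.1 hn)) fun p _ _ => hterm p n
    _ = ∑ p ∈ Finset.range N, (1 / (Nat.factorial p) : ℝ) *
          ∑ n ∈ Finset.range N, coeff n (f ^ p) * ρ ^ n := by
        rw [Finset.sum_comm]
        simp_rw [Finset.mul_sum]
    _ ≤ ∑ p ∈ Finset.range N, A ^ p / (Nat.factorial p) := by
        refine Finset.sum_le_sum fun p _ => ?_
        rw [one_div_mul_eq_div]
        gcongr
        exact sum_le_hasSum _ (fun n _ => mul_nonneg (coeff_pow_nonneg hf p n) (pow_nonneg hρ n))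
          (hasSum_coeff_pow_mul_pow hf hρ hfA p)
    _ ≤ Real.exp A := Real.sum_le_exp_of_nonneg hA N

end PowerSeries

open PowerSeries

variable {c : ℕ → ℝ} {ρ : ℝ}

theorem mul_pow_succ_pow_le {k : ℕ} (hc0 : c 0 = 0) (hρ0 : 0 ≤ ρ) (hρ1 : ρ ≤ 1)
    (hc : 0 ≤ c k) (j : ℕ) : c k * (ρ ^ (j + 1)) ^ k ≤ ρ ^ j * (c k * ρ ^ k) := by
  rcases Nat.eq_zero_or_pos k with rfl | hk
  · simp [hc0]
  calc c k * (ρ ^ (j + 1)) ^ k = c k * ρ ^ ((j + 1) * k) := by rw [pow_mul]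
    _ ≤ c k * ρ ^ (j + k) :=
        mul_le_mul_of_nonneg_left (pow_le_pow_of_le_one hρ0 hρ1 (by nlinarith)) hc
    _ = ρ ^ j * (c k * ρ ^ k) := by rw [pow_add]; ring

theorem summable_mul_pow_succ_pow_div (hc : ∀ k, 0 ≤ c k) (hc0 : c 0 = 0) (hρ0 : 0 ≤ ρ)
    (hρ1 : ρ < 1) (hsum : Summable fun k => c k * ρ ^ k) :
    Summable fun x : ℕ × ℕ => c x.2 * (ρ ^ (x.1 + 1)) ^ x.2 / (x.1 + 1) := by
  refine Summable.of_nonneg_of_le (fun x => by have := hc x.2; positivity) (fun x => ?_)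
    ((summable_geometric_of_lt_one hρ0 hρ1).mul_of_nonneg hsum (fun j => pow_nonneg hρ0 j)
      fun k => mul_nonneg (hc k) (pow_nonneg hρ0 k))
  calc c x.2 * (ρ ^ (x.1 + 1)) ^ x.2 / (x.1 + 1) ≤ c x.2 * (ρ ^ (x.1 + 1)) ^ x.2 :=
        div_le_self (by have := hc x.2; positivity) (by linarith [x.1.cast_nonneg (α := ℝ)])
    _ ≤ ρ ^ x.1 * (c x.2 * ρ ^ x.2) := mul_pow_succ_pow_le hc0 hρ0 hρ1.le (hc x.2) x.1

theorem coeff_sH (n : ℕ) : coeff n (sH c) = ∑ x ∈ n.divisorsAntidiagonal, c x.2 / x.1 := by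
  rw [sH, coeff_mk, Nat.sum_divisorsAntidiagonal (fun i j => c j / i)]

theorem coeff_sH_nonneg (hc : ∀ k, 0 ≤ c k) (n : ℕ) : 0 ≤ coeff n (sH c) := by
  rw [coeff_sH]
  exact Finset.sum_nonneg fun x _ => div_nonneg (hc x.2) x.1.cast_nonneg

theorem le_coeff_sH (hc : ∀ k, 0 ≤ c k) {n : ℕ} (hn : n ≠ 0) : c n ≤ coeff n (sH c) := by
  rw [sH, coeff_mk]
  simpa using Finset.single_le_sum (f := fun j => c (n / j) / (j : ℝ))
    (fun j _ => div_nonneg (hc _) j.cast_nonneg) (Nat.one_mem_divisors.2 hn)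

theorem summable_coeff_sH_mul_pow (hc : ∀ k, 0 ≤ c k) (hc0 : c 0 = 0) (hρ0 : 0 ≤ ρ)
    (hρ1 : ρ < 1) (hsum : Summable fun k => c k * ρ ^ k) :
    Summable fun n => coeff n (sH c) * ρ ^ n := by
  -- `(a, b) ∈ n.divisorsAntidiagonal` is the term `j = a`, `k = b` of the double series
  set e : (Σ n : ℕ, n.divisorsAntidiagonal) → ℕ × ℕ :=
    fun x => ((x.2 : ℕ × ℕ).1 - 1, (x.2 : ℕ × ℕ).2)
  have he : Function.Injective e := by
    rintro ⟨n, ⟨a, b⟩, h⟩ ⟨n', ⟨a', b'⟩, h'⟩ hee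
    simp only [Nat.mem_divisorsAntidiagonal] at h h'
    simp only [e, Prod.mk.injEq] at hee
    obtain ⟨rfl, rfl⟩ : a = a' ∧ b = b' := by
      have : a ≠ 0 := left_ne_zero_of_mul (h.1 ▸ h.2)
      have : a' ≠ 0 := left_ne_zero_of_mul (h'.1 ▸ h'.2)
      omega
    obtain rfl : n = n' := h.1.symm.trans h'.1
    rfl
  have hterm : ∀ n, coeff n (sH c) * ρ ^ n = ∑' y : n.divisorsAntidiagonal,
      (fun x : ℕ × ℕ => c x.2 * (ρ ^ (x.1 + 1)) ^ x.2 / (x.1 + 1)) (e ⟨n, y⟩) := by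
    intro n
    rw [Finset.tsum_subtype n.divisorsAntidiagonal
      (fun y => c y.2 * (ρ ^ (y.1 - 1 + 1)) ^ y.2 / ((y.1 - 1 : ℕ) + 1 : ℝ)), coeff_sH,
      Finset.sum_mul]
    refine Finset.sum_congr rfl fun x hx => ?_
    obtain ⟨hab, hn⟩ := Nat.mem_divisorsAntidiagonal.1 hx
    have : x.1 - 1 + 1 = x.1 :=
      Nat.sub_add_cancel (Nat.pos_of_ne_zero (left_ne_zero_of_mul (hab ▸ hn)))
    rw [← hab, this, ← pow_mul]
    push_cast [Nat.cast_sub (this ▸ Nat.le_add_left 1 _ : 1 ≤ x.1)]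
    ring
  simpa only [hterm, Function.comp_def] using
    ((summable_mul_pow_succ_pow_div hc hc0 hρ0 hρ1 hsum).comp_injective he).sigma

theorem gone_nonneg (hc : ∀ k, 0 ≤ c k) (n : ℕ) : 0 ≤ gone c n :=
  Finset.sum_nonneg fun p _ =>
    mul_nonneg (by positivity) (coeff_pow_nonneg (coeff_sH_nonneg hc) p n)

theorem le_gone (hc : ∀ k, 0 ≤ c k) (hc0 : c 0 = 0) (n : ℕ) : c n ≤ gone c n := by
  rcases eq_or_ne n 0 with rfl | hn
  · exact hc0 ▸ gone_nonneg hc 0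
  calc c n ≤ coeff n (sH c) := le_coeff_sH hc hn
    _ = (1 / (Nat.factorial 1) : ℝ) * coeff n (sH c ^ 1) := by simp
    _ ≤ gone c n :=
        Finset.single_le_sum (f := fun p => (1 / (Nat.factorial p) : ℝ) * coeff n (sH c ^ p))
          (fun p _ => mul_nonneg (by positivity) (coeff_pow_nonneg (coeff_sH_nonneg hc) p n))
          (Finset.mem_range.2 (by omega))

/-- If `C(x) = ∑ c_k x^k` has nonnegative coefficients, radius of convergence
`ρ ∈ (0,1)` and `C(ρ) < ∞`, then with `g_n = [x^n] exp(∑_{j≥1} C(x^j)/j)`: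
(a) `∑_{j≥1} C(ρ^j)/j` converges; (b) `∑ g_n ρ^n` converges; (c) `∑ g_n r^n` diverges for
every `r > ρ`. I.e. `G(x)` has radius of convergence `ρ` and `G(ρ) < ∞`. -/
theorem statement5
    (c : ℕ → ℝ) (hcnn : ∀ k, 0 ≤ c k) (hc0 : c 0 = 0)
    (ρ : ℝ) (hρ0 : 0 < ρ) (hρ1 : ρ < 1)
    (hsum : Summable (fun k => c k * ρ ^ k))
    (hdiv : ∀ r : ℝ, ρ < r → ¬ Summable (fun k => c k * r ^ k)) :
    Summable (fun j : ℕ => Ct c (ρ ^ (j + 1)) / (j + 1)) ∧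
    Summable (fun n : ℕ => gone c n * ρ ^ n) ∧
    ∀ r : ℝ, ρ < r → ¬ Summable (fun n : ℕ => gone c n * r ^ n) := by
  refine ⟨?_, ?_, fun r hr hg => hdiv r hr ?_⟩
  · simpa only [Ct, tsum_div_const] using
      (summable_mul_pow_succ_pow_div hcnn hc0 hρ0.le hρ1 hsum).prod
  · exact summable_coeff_exp_mul_pow (coeff_sH_nonneg hcnn) hρ0.le
      (summable_coeff_sH_mul_pow hcnn hc0 hρ0.le hρ1 hsum).hasSum
  · have hr : 0 ≤ r := hρ0.le.trans hr.le
    exact hg.of_nonneg_of_le (fun k => mul_nonneg (hcnn k) (pow_nonneg hr k))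
      fun k => mul_le_mul_of_nonneg_right (le_gone hcnn hc0 k) (pow_nonneg hr k)
end

section
/- Let (c_k)_{k≥1} be nonnegative real numbers, not identically zero, with c_0 := 0, let m := min{k : c_k > 0}, let ρ ∈ (0,1) with C(ρ) := ∑_{k≥1} c_k ρ^k < ∞, and write C(z) := ∑_{k≥1} c_k z^k. Then the series ∑_{j≥1} (C(ρ^j) − c_m ρ^{jm})/(j ρ^{jm}) converges, the infinite product ∏_{k>m} (1 − ρ^{k−m})^{c_k} converges (i.e., the partial products ∏_{m<k≤S} (1 − ρ^{k−m})^{c_k} converge as S → ∞ to a positive limit), and ∏_{k>m} (1 − ρ^{k−m})^{c_k} = exp( − ∑_{j≥1} (C(ρ^j) − c_m ρ^{jm})/(j ρ^{jm}) ). -/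
open scoped ENNReal NNReal BigOperators
open Filter

/-!
Write `g k = c (k + m + 1)`. Since `c` vanishes below `m`, the `j`-th term of the series is
`∑_k g_k ρ^{(j+1)(k+1)} / (j+1)`, while `-log (1 - ρ^{k+1}) = ∑_j ρ^{(j+1)(k+1)} / (j+1)`.
The double series `∑_{j,k} g_k ρ^{(j+1)(k+1)} / (j+1)` is nonnegative and dominated by
`(∑_j ρ^j) (∑_k g_k ρ^{k+1}) < ∞`, so summing it by rows and by columns shows that the series
converges to `-∑_k g_k log (1 - ρ^{k+1})`. The partial products are the exponentials of the
partial sums of this last series.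
-/

open Finset Real

theorem summable_mul_pow_of_le {c : ℕ → ℝ} (hc : ∀ k, 0 ≤ c k) {z ρ : ℝ} (hz : 0 ≤ z)
    (hzρ : z ≤ ρ) (h : Summable fun k => c k * ρ ^ k) : Summable fun k => c k * z ^ k :=
  h.of_nonneg_of_le (fun k => mul_nonneg (hc k) (pow_nonneg hz k))
    fun k => mul_le_mul_of_nonneg_left (pow_le_pow_left₀ hz hzρ k) (hc k)

theorem hasSum_Ct_sub_div_pow {c : ℕ → ℝ} {m : ℕ} (hc : ∀ k < m, c k = 0) {z : ℝ} (hz : z ≠ 0)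
    (h : Summable fun k => c k * z ^ k) :
    HasSum (fun k => c (k + (m + 1)) * z ^ (k + 1)) ((Ct c z - c m * z ^ m) / z ^ m) := by
  have hhead : ∑ i ∈ range (m + 1), c i * z ^ i = c m * z ^ m := by
    rw [sum_range_succ, sum_eq_zero fun i hi => by rw [hc i (mem_range.1 hi), zero_mul],
      zero_add]
  have htail := (hasSum_nat_add_iff' (f := fun k => c k * z ^ k) (m + 1)).2 h.hasSum
  rw [hhead] at htail
  refine (htail.div_const (z ^ m)).congr_fun fun k => ?_
  rw [show k + (m + 1) = k + 1 + m by omega, pow_add z (k + 1) m]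
  field_simp

theorem prod_Ioc_rpow_eq_exp_sum (c : ℕ → ℝ) {ρ : ℝ} (hρ0 : 0 ≤ ρ) (hρ1 : ρ < 1) (m S : ℕ) :
    ∏ k ∈ Ioc m S, (1 - ρ ^ (k - m)) ^ c k =
      exp (∑ i ∈ range (S - m), c (i + (m + 1)) * log (1 - ρ ^ (i + 1))) := by
  rw [← Finset.Ico_add_one_add_one_eq_Ioc, prod_Ico_eq_prod_range, Nat.add_sub_add_right, exp_sum]
  refine prod_congr rfl fun i _ => ?_
  have hpos : 0 < 1 - ρ ^ (i + 1) := sub_pos.2 (pow_lt_one₀ hρ0 hρ1 i.succ_ne_zero)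
  rw [show m + 1 + i - m = i + 1 by omega, rpow_def_of_pos hpos, mul_comm, add_comm (m + 1)]

theorem exists_hasSum_rows_hasSum_mul_log {g : ℕ → ℝ} (hg : ∀ k, 0 ≤ g k) {ρ : ℝ} (hρ0 : 0 ≤ ρ)
    (hρ1 : ρ < 1) (hgρ : Summable fun k => g k * ρ ^ (k + 1)) :
    ∃ a, HasSum (fun j : ℕ => (∑' k, g k * (ρ ^ (j + 1)) ^ (k + 1)) / (j + 1)) a ∧
      HasSum (fun k => g k * log (1 - ρ ^ (k + 1))) (-a) := by
  set F : ℕ × ℕ → ℝ := fun p => g p.2 * (ρ ^ (p.1 + 1)) ^ (p.2 + 1) / (p.1 + 1)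
  have hF : Summable F := by
    have hgeo := (summable_geometric_of_lt_one hρ0 hρ1).mul_of_nonneg hgρ
      (fun j => pow_nonneg hρ0 j) fun k => mul_nonneg (hg k) (pow_nonneg hρ0 _)
    have hF0 : ∀ p : ℕ × ℕ, 0 ≤ g p.2 * (ρ ^ (p.1 + 1)) ^ (p.2 + 1) := fun p =>
      mul_nonneg (hg _) (pow_nonneg (pow_nonneg hρ0 _) _)
    refine hgeo.of_nonneg_of_le (fun p => div_nonneg (hF0 p) (by positivity)) fun ⟨j, k⟩ => ?_
    calc F (j, k) ≤ g k * (ρ ^ (j + 1)) ^ (k + 1) :=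
          div_le_self (hF0 (j, k)) (by linarith [(j.cast_nonneg : (0 : ℝ) ≤ j)])
      _ ≤ g k * ρ ^ (j + (k + 1)) := by
          rw [← pow_mul]
          exact mul_le_mul_of_nonneg_left
            (pow_le_pow_of_le_one hρ0 hρ1.le (by nlinarith)) (hg k)
      _ = ρ ^ j * (g k * ρ ^ (k + 1)) := by ring
  refine ⟨∑' p, F p, hF.hasSum.prod_fiberwise fun j => ?_, ?_⟩
  · rw [← tsum_div_const]
    exact (hF.prod_factor j).hasSum
  · have hcols : HasSum (fun k => -(g k * log (1 - ρ ^ (k + 1)))) (∑' p, F p) := by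
      refine ((Equiv.prodComm ℕ ℕ).hasSum_iff.2 hF.hasSum).prod_fiberwise fun k => ?_
      have hx : |ρ ^ (k + 1)| < 1 := by
        rw [abs_of_nonneg (pow_nonneg hρ0 _)]
        exact pow_lt_one₀ hρ0 hρ1 k.succ_ne_zero
      have hlog := (hasSum_pow_div_log_of_abs_lt_one hx).mul_left (g k)
      rw [mul_neg] at hlog
      refine hlog.congr_fun fun j => ?_
      simp only [Function.comp, Equiv.prodComm_apply, Prod.fst_swap, Prod.snd_swap, F,
        ← pow_mul, mul_comm (k + 1), mul_div_assoc]
    simpa using hcols.neg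

theorem statement16_general
    (c : ℕ → ℝ) (hcnn : ∀ k, 0 ≤ c k)
    (m : ℕ) (hm : m = sInf {k | 0 < c k})
    (ρ : ℝ) (hρ0 : 0 < ρ) (hρ1 : ρ < 1)
    (hsum : Summable (fun k => c k * ρ ^ k)) :
    Summable (fun j : ℕ =>
      (Ct c (ρ ^ (j + 1)) - c m * ρ ^ ((j + 1) * m)) / ((j + 1) * ρ ^ ((j + 1) * m))) ∧
    Filter.Tendsto (fun S : ℕ => ∏ k ∈ Finset.Ioc m S, (1 - ρ ^ (k - m)) ^ (c k))
      Filter.atTop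
      (nhds (Real.exp (-(∑' j : ℕ,
        (Ct c (ρ ^ (j + 1)) - c m * ρ ^ ((j + 1) * m)) / ((j + 1) * ρ ^ ((j + 1) * m)))))) := by
  have hvanish : ∀ k < m, c k = 0 := fun k hk =>
    ((hcnn k).lt_or_eq.resolve_left fun hpos => (hm ▸ hk).not_ge (Nat.sInf_le hpos)).symm
  have hrow (j : ℕ) := hasSum_Ct_sub_div_pow hvanish (pow_ne_zero (j + 1) hρ0.ne')
    (summable_mul_pow_of_le hcnn (pow_nonneg hρ0.le _)
      (pow_le_of_le_one hρ0.le hρ1.le j.succ_ne_zero) hsum)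
  obtain ⟨a, hrows, hlog⟩ := exists_hasSum_rows_hasSum_mul_log (fun k => hcnn _) hρ0.le hρ1
    (hasSum_Ct_sub_div_pow hvanish hρ0.ne' hsum).summable
  have hterms : HasSum (fun j : ℕ =>
      (Ct c (ρ ^ (j + 1)) - c m * ρ ^ ((j + 1) * m)) / ((j + 1) * ρ ^ ((j + 1) * m))) a :=
    hrows.congr_fun fun j => by rw [(hrow j).tsum_eq, pow_mul, div_div, mul_comm (_ ^ m)]
  refine ⟨hterms.summable, ?_⟩
  simp_rw [prod_Ioc_rpow_eq_exp_sum c hρ0.le hρ1, hterms.tsum_eq]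
  exact (continuous_exp.tendsto _).comp (hlog.tendsto_sum_nat.comp (tendsto_sub_atTop_nat m))

/-- The series `∑_{j≥1} (C(ρ^j) - c_m ρ^{jm})/(j ρ^{jm})` converges, and the
infinite product `∏_{k>m} (1 - ρ^{k-m})^{c_k}` converges (as the limit of the partial
products `∏_{m<k≤S}` as `S → ∞`) to `exp(-∑_{j≥1} (C(ρ^j) - c_m ρ^{jm})/(j ρ^{jm}))`
(a positive limit). -/
theorem statement16
    (c : ℕ → ℝ) (hcnn : ∀ k, 0 ≤ c k) (hc0 : c 0 = 0) (hne : ∃ k, 0 < c k)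
    (m : ℕ) (hm : m = sInf {k | 0 < c k})
    (ρ : ℝ) (hρ0 : 0 < ρ) (hρ1 : ρ < 1)
    (hsum : Summable (fun k => c k * ρ ^ k)) :
    Summable (fun j : ℕ =>
      (Ct c (ρ ^ (j + 1)) - c m * ρ ^ ((j + 1) * m)) / ((j + 1) * ρ ^ ((j + 1) * m))) ∧
    Filter.Tendsto (fun S : ℕ => ∏ k ∈ Finset.Ioc m S, (1 - ρ ^ (k - m)) ^ (c k))
      Filter.atTop
      (nhds (Real.exp (-(∑' j : ℕ,
        (Ct c (ρ ^ (j + 1)) - c m * ρ ^ ((j + 1) * m)) / ((j + 1) * ρ ^ ((j + 1) * m)))))) :=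
  statement16_general c hcnn m hm ρ hρ0 hρ1 hsum
end

section
/- Let (c_k)_{k≥1} be a sequence of nonnegative real numbers that is subexponential with radius of convergence ρ ∈ (0,∞), let m := min{k : c_k > 0}, and let (X_i)_{i≥1} be independent identically distributed ℕ-valued random variables with P(X_1 = k) = c_k ρ^k / C(ρ) for k ≥ 1 (so X_i ≥ m almost surely). Then for every δ > 0 there exist A > 0 and N_0 ∈ ℕ such that for all p, r ∈ ℕ₀ and all integers Ñ ≥ N_0: P( ∑_{i=1}^{p} (X_i − m) = Ñ − r ) ≤ A · (1+δ)^{p+r} · P( X_1 = Ñ + m ). (For p = 0 the left-hand side is 1 if r = Ñ and 0 otherwise.) -/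
/-!
Tilting by `ρ` turns `(c_k)` into a probability law `q` on `ℕ` with `q n / q (n + 1) → 1` and
`(q ∗ q)(n) / q n → 2`, and the event in question is `{X₀ + ⋯ + X_{p-1} = Ñ + p m - r}`, of
probability `q^{∗p}(Ñ + p m - r)`. Kesten's argument gives `q^{∗p}(n) ≤ B b^p q(n)` for every
`b > 1` and all large `n`: in `q^{∗(p+1)}(n) = ∑_k q^{∗p}(k) q(n - k)` the terms with `k ≥ n₀` are
bounded inductively, and their total weight `∑_{k ≥ n₀} q(k) q(n - k)` is at most `a q(n)` with
`a < b`, because `(q ∗ q)(n) ≈ 2 q(n)` while the terms with `k < n₀` already carry almost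
`q(n)`; the remaining `n₀` terms cost `O(q(n))` since `q` varies slowly. Slow variation also gives
`q(Ñ + p m - r) ≤ θ^{m(p+1)+r} q(Ñ + m)` with `θ` close to `1`; and when `Ñ + p m - r` is small,
`r ≥ Ñ - O(1)`, so the trivial bound `1` is absorbed by `(1 + δ)^Ñ q(Ñ) → ∞`.
-/

open scoped ENNReal NNReal BigOperators
open MeasureTheory Filter

/-- A sequence `(c_k)` of nonnegative reals (with `c 0 = 0`) is subexponential with radius of
convergence `ρ`. -/
def IsSubexp (c : ℕ → ℝ) (ρ : ℝ) : Prop :=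
  (∀ k, 0 ≤ c k) ∧ c 0 = 0 ∧ (∃ K, ∀ k, K ≤ k → 0 < c k) ∧
  Summable (fun k => c k * ρ ^ k) ∧
  Filter.Tendsto (fun n => c (n - 1) / c n) Filter.atTop (nhds ρ) ∧
  Filter.Tendsto (fun n => (∑ k ∈ Finset.range (n + 1), c k * c (n - k)) / c n)
    Filter.atTop (nhds (2 * Ct c ρ))

open Finset Topology

noncomputable def convPow (q : ℕ → ℝ) : ℕ → ℕ → ℝ
  | 0, n => if n = 0 then 1 else 0
  | p + 1, n => ∑ k ∈ range (n + 1), convPow q p k * q (n - k)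

section convPow

variable {q : ℕ → ℝ}

lemma convPow_nonneg (hq : ∀ k, 0 ≤ q k) (p n : ℕ) : 0 ≤ convPow q p n := by
  induction p generalizing n with
  | zero => unfold convPow; positivity
  | succ p ih => exact sum_nonneg fun k _ => mul_nonneg (ih k) (hq _)

lemma convPow_le_one (hq : ∀ k, 0 ≤ q k) (hq1 : ∀ n, ∑ k ∈ range n, q k ≤ 1) (p n : ℕ) :
    convPow q p n ≤ 1 := by
  induction p generalizing n with
  | zero => unfold convPow; split_ifs <;> norm_num
  | succ p ih =>
    calc convPow q (p + 1) n ≤ ∑ k ∈ range (n + 1), q (n + 1 - 1 - k) :=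
          sum_le_sum fun k _ => mul_le_of_le_one_left (hq _) (ih k)
      _ = ∑ k ∈ range (n + 1), q k := sum_range_reflect q (n + 1)
      _ ≤ 1 := hq1 _

lemma sum_Ico_mul_le_of_window (hq : ∀ k, 0 ≤ q k) {n n₀ h : ℕ} (hh : h ≤ n₀) (hn : n₀ ≤ n + 1)
    {c w t : ℝ} (ht : 0 < t) (hconv : ∑ k ∈ range (n + 1), q k * q (n - k) ≤ c * q n)
    (hw : w ≤ ∑ k ∈ range h, q k) (hratio : ∀ k < h, q n ≤ t * q (n - k)) :
    ∑ k ∈ Ico n₀ (n + 1), q k * q (n - k) ≤ (c - w / t) * q n := by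
  have hwindow : w / t * q n ≤ ∑ k ∈ range n₀, q k * q (n - k) :=
    calc w / t * q n = w * (q n / t) := by ring
      _ ≤ (∑ k ∈ range h, q k) * (q n / t) := by gcongr; exact div_nonneg (hq n) ht.le
      _ ≤ ∑ k ∈ range h, q k * q (n - k) := by
        rw [sum_mul]
        refine sum_le_sum fun k hk => mul_le_mul_of_nonneg_left ?_ (hq k)
        rw [div_le_iff₀ ht, mul_comm]
        exact hratio k (mem_range.1 hk)
      _ ≤ ∑ k ∈ range n₀, q k * q (n - k) :=
        sum_le_sum_of_subset_of_nonneg (range_subset_range.2 hh)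
          fun k _ _ => mul_nonneg (hq k) (hq _)
  rw [sub_mul]
  linarith [sum_range_add_sum_Ico (fun k => q k * q (n - k)) hn]

theorem convPow_le_of_head_tail (hq : ∀ k, 0 ≤ q k) (hq1 : ∀ n, ∑ k ∈ range n, q k ≤ 1)
    {n₀ n₁ : ℕ} (hn₀ : 0 < n₀) {a b G B : ℝ} (hb : 1 ≤ b) (hG : 0 ≤ G) (hGB : G ≤ B)
    (hB : G ≤ B * (b - a))
    (hhead : ∀ n, n₁ ≤ n → ∑ k ∈ Ico n₀ (n + 1), q k * q (n - k) ≤ a * q n)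
    (htail : ∀ n, n₁ ≤ n → ∑ k ∈ range n₀, q (n - k) ≤ G * q n)
    (hsmall : ∀ n, n₀ ≤ n → n < n₁ → 1 ≤ G * q n) (p n : ℕ) (hn : n₀ ≤ n) :
    convPow q p n ≤ B * b ^ p * q n := by
  have hB0 : 0 ≤ B := hG.trans hGB
  induction p generalizing n with
  | zero => rw [convPow, if_neg (by omega)]; exact mul_nonneg (by positivity) (hq n)
  | succ p ih =>
    have hbp : 1 ≤ b ^ p := one_le_pow₀ hb
    rcases lt_or_ge n n₁ with hn₁ | hn₁
    · calc convPow q (p + 1) n ≤ 1 := convPow_le_one hq hq1 _ _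
        _ ≤ G * q n := hsmall n hn hn₁
        _ ≤ B * b ^ (p + 1) * q n :=
          mul_le_mul_of_nonneg_right
            (hGB.trans (le_mul_of_one_le_right hB0 (one_le_pow₀ hb))) (hq n)
    · have htail' : ∑ k ∈ range n₀, convPow q p k * q (n - k) ≤ G * q n :=
        (sum_le_sum fun k _ => mul_le_of_le_one_left (hq _) (convPow_le_one hq hq1 p k)).trans
          (htail n hn₁)
      have hhead' : ∑ k ∈ Ico n₀ (n + 1), convPow q p k * q (n - k) ≤ B * b ^ p * (a * q n) :=
        calc _ ≤ ∑ k ∈ Ico n₀ (n + 1), B * b ^ p * (q k * q (n - k)) :=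
              sum_le_sum fun k hk => by
                rw [← mul_assoc]
                exact mul_le_mul_of_nonneg_right (ih k (mem_Ico.1 hk).1) (hq _)
          _ ≤ B * b ^ p * (a * q n) := by
              rw [← mul_sum]
              exact mul_le_mul_of_nonneg_left (hhead n hn₁) (by positivity)
      calc convPow q (p + 1) n
          = ∑ k ∈ range n₀, convPow q p k * q (n - k)
            + ∑ k ∈ Ico n₀ (n + 1), convPow q p k * q (n - k) :=
            (sum_range_add_sum_Ico _ (by omega)).symm
        _ ≤ b ^ p * G * q n + B * b ^ p * (a * q n) := by
            gcongr
            exact htail'.trans (by gcongr; exacts [hq n, le_mul_of_one_le_left hG hbp])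
        _ = b ^ p * (G + B * a) * q n := by ring
        _ ≤ b ^ p * (B * b) * q n := by gcongr; exacts [hq n, by linarith]
        _ = B * b ^ (p + 1) * q n := by ring

end convPow

section ratio

variable {u : ℕ → ℝ} {θ : ℝ} {N : ℕ}

lemma le_pow_mul_add (hθ : 0 ≤ θ) (h : ∀ n, N ≤ n → u n ≤ θ * u (n + 1)) {n : ℕ} (hn : N ≤ n)
    (j : ℕ) : u n ≤ θ ^ j * u (n + j) := by
  induction j with
  | zero => simp
  | succ j ih =>
    calc u n ≤ θ ^ j * u (n + j) := ih
      _ ≤ θ ^ j * (θ * u (n + j + 1)) := by gcongr; exact h _ (hn.trans (Nat.le_add_right n j))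
      _ = θ ^ (j + 1) * u (n + (j + 1)) := by ring_nf

lemma add_le_pow_mul (hθ : 0 ≤ θ) (h : ∀ n, N ≤ n → u (n + 1) ≤ θ * u n) {n : ℕ} (hn : N ≤ n)
    (j : ℕ) : u (n + j) ≤ θ ^ j * u n := by
  induction j with
  | zero => simp
  | succ j ih =>
    calc u (n + (j + 1)) ≤ θ * u (n + j) := h _ (hn.trans (Nat.le_add_right n j))
      _ ≤ θ * (θ ^ j * u n) := by gcongr
      _ = θ ^ (j + 1) * u n := by ring

lemma le_pow_mul_of_ratio_le (hθ : 1 ≤ θ) (hu : ∀ n, 0 ≤ u n)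
    (h : ∀ n, N ≤ n → u n ≤ θ * u (n + 1) ∧ u (n + 1) ≤ θ * u n) {n n' d : ℕ}
    (hn : N ≤ n) (hn' : N ≤ n') (hd : n ≤ n' + d) (hd' : n' ≤ n + d) :
    u n ≤ θ ^ d * u n' := by
  have hθ0 : 0 ≤ θ := zero_le_one.trans hθ
  rcases le_total n n' with hle | hle
  · obtain ⟨j, rfl⟩ := Nat.exists_eq_add_of_le hle
    calc u n ≤ θ ^ j * u (n + j) := le_pow_mul_add hθ0 (fun k hk => (h k hk).1) hn j
      _ ≤ θ ^ d * u (n + j) :=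
          mul_le_mul_of_nonneg_right (pow_le_pow_right₀ hθ (by omega)) (hu _)
  · obtain ⟨j, rfl⟩ := Nat.exists_eq_add_of_le hle
    calc u (n' + j) ≤ θ ^ j * u n' := add_le_pow_mul hθ0 (fun k hk => (h k hk).2) hn' j
      _ ≤ θ ^ d * u n' :=
          mul_le_mul_of_nonneg_right (pow_le_pow_right₀ hθ (by omega)) (hu _)

end ratio

lemma exists_one_lt_pow_le {a : ℝ} (ha : 1 < a) (m : ℕ) : ∃ θ, 1 < θ ∧ θ ^ m ≤ a := by
  have hpow : ∀ᶠ θ in 𝓝[>] (1 : ℝ), θ ^ m < a :=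
    nhdsWithin_le_nhds <| ((continuous_pow m).tendsto' 1 1 (one_pow m)).eventually
      (gt_mem_nhds ha)
  obtain ⟨θ, hθ, hθa⟩ := (eventually_mem_nhdsWithin.and hpow).exists
  exact ⟨θ, hθ, hθa.le⟩

structure IsSubexpDistrib (q : ℕ → ℝ) : Prop where
  nonneg : ∀ k, 0 ≤ q k
  hasSum : HasSum q 1
  eventually_pos : ∀ᶠ n in atTop, 0 < q n
  tendsto_ratio : Tendsto (fun n => q n / q (n + 1)) atTop (𝓝 1)
  tendsto_conv : Tendsto (fun n => (∑ k ∈ range (n + 1), q k * q (n - k)) / q n) atTop (𝓝 2)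

namespace IsSubexpDistrib

variable {q : ℕ → ℝ}

lemma sum_range_le_one (hq : IsSubexpDistrib q) (n : ℕ) : ∑ k ∈ range n, q k ≤ 1 :=
  sum_le_hasSum _ (fun k _ => hq.nonneg k) hq.hasSum

lemma eventually_ratio_le (hq : IsSubexpDistrib q) {θ : ℝ} (hθ : 1 < θ) :
    ∀ᶠ n in atTop, 0 < q n ∧ q n ≤ θ * q (n + 1) ∧ q (n + 1) ≤ θ * q n := by
  filter_upwards [hq.eventually_pos, (tendsto_add_atTop_nat 1).eventually hq.eventually_pos,
    hq.tendsto_ratio (Ioo_mem_nhds (inv_lt_one_of_one_lt₀ hθ) hθ)] with n hn hn1 hratio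
  obtain ⟨hlo, hhi⟩ := hratio
  rw [lt_div_iff₀ hn1, inv_mul_lt_iff₀ (by linarith)] at hlo
  rw [div_lt_iff₀ hn1] at hhi
  exact ⟨hn, hhi.le, hlo.le⟩

lemma eventually_conv_le (hq : IsSubexpDistrib q) {c : ℝ} (hc : 2 < c) :
    ∀ᶠ n in atTop, ∑ k ∈ range (n + 1), q k * q (n - k) ≤ c * q n := by
  filter_upwards [hq.eventually_pos, hq.tendsto_conv.eventually (gt_mem_nhds hc)] with n hn hconv
  exact ((div_lt_iff₀ hn).1 hconv).le

lemma exists_sum_range_ge (hq : IsSubexpDistrib q) {w : ℝ} (hw : w < 1) :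
    ∃ h, w ≤ ∑ k ∈ range h, q k :=
  (hq.hasSum.tendsto_sum_nat.eventually (lt_mem_nhds hw)).exists.imp fun _ h => h.le

lemma tendsto_pow_mul_atTop (hq : IsSubexpDistrib q) {a : ℝ} (ha : 1 < a) :
    Tendsto (fun n => a ^ n * q n) atTop atTop := by
  obtain ⟨θ, hθ, hθa⟩ := exists_between ha
  obtain ⟨N, hN⟩ := eventually_atTop.1 (hq.eventually_ratio_le hθ)
  have hlow : ∀ n, N ≤ n → (a / θ) ^ n * q N ≤ a ^ n * q n := by
    intro n hn
    have hqN : q N ≤ θ ^ n * q n :=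
      le_pow_mul_of_ratio_le hθ.le hq.nonneg (fun k hk => (hN k hk).2) le_rfl hn (by omega)
        (by omega)
    calc (a / θ) ^ n * q N ≤ (a / θ) ^ n * (θ ^ n * q n) := by gcongr
      _ = a ^ n * q n := by rw [div_pow]; field_simp
  exact tendsto_atTop_mono' _ (eventually_atTop.2 ⟨N, hlow⟩)
    ((tendsto_pow_atTop_atTop_of_one_lt ((one_lt_div (by linarith)).2 hθa)).atTop_mul_const
      (hN N le_rfl).1)

theorem exists_convPow_le (hq : IsSubexpDistrib q) {b : ℝ} (hb : 1 < b) :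
    ∃ B, 0 ≤ B ∧ ∃ n₀, ∀ p n, n₀ ≤ n → convPow q p n ≤ B * b ^ p * q n := by
  -- `x` is chosen so that `2 + x - (1 - x) / (1 + x) ≤ 1 + 3 x < b`.
  set x := (b - 1) / 6 with hx
  have hx0 : 0 < x := by rw [hx]; linarith
  obtain ⟨h, hh⟩ := hq.exists_sum_range_ge (w := 1 - x) (by linarith)
  obtain ⟨θ, hθ, hθh⟩ := exists_one_lt_pow_le (a := 1 + x) (by linarith) h
  obtain ⟨N₁, hN₁⟩ := eventually_atTop.1 (hq.eventually_ratio_le hθ)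
  obtain ⟨N₂, hN₂⟩ := eventually_atTop.1 (hq.eventually_conv_le (c := 2 + x) (by linarith))
  have hshift : ∀ {n n' d : ℕ}, N₁ ≤ n → N₁ ≤ n' → n ≤ n' + d → n' ≤ n + d →
      q n ≤ θ ^ d * q n' :=
    le_pow_mul_of_ratio_le hθ.le hq.nonneg fun k hk => (hN₁ k hk).2
  set n₀ := h + N₁ + 1
  set n₁ := n₀ + N₁ + N₂
  set G := n₀ * θ ^ n₀ + ∑ k ∈ Ico n₀ n₁, (q k)⁻¹
  have hG : 0 ≤ G := add_nonneg (by positivity) (sum_nonneg fun k _ => inv_nonneg.2 (hq.nonneg k))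
  have hba : 0 < b - (1 + 3 * x) := by rw [hx]; linarith
  have hGB : 0 ≤ G / (b - (1 + 3 * x)) := div_nonneg hG hba.le
  refine ⟨G / (b - (1 + 3 * x)) + G, add_nonneg hGB hG, n₀,
    convPow_le_of_head_tail (n₁ := n₁) (a := 1 + 3 * x) hq.nonneg hq.sum_range_le_one
      (by omega) hb.le hG (le_add_of_nonneg_left hGB) ?_ ?_ ?_ ?_⟩
  · rw [add_mul, div_mul_cancel₀ _ hba.ne']
    exact le_add_of_nonneg_right (mul_nonneg hG hba.le)
  · intro n hn
    have hθh1 : 1 ≤ θ ^ h := one_le_pow₀ hθ.le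
    have hwindow : 1 - 2 * x ≤ (1 - x) / θ ^ h := by
      rw [le_div_iff₀ (by positivity)]
      nlinarith [mul_nonneg hx0.le (sub_nonneg.2 hθh1)]
    calc ∑ k ∈ Ico n₀ (n + 1), q k * q (n - k) ≤ (2 + x - (1 - x) / θ ^ h) * q n :=
          sum_Ico_mul_le_of_window hq.nonneg (by omega) (by omega) (by positivity)
            (hN₂ n (by omega)) hh fun k hk => hshift (by omega) (by omega) (by omega) (by omega)
      _ ≤ (1 + 3 * x) * q n := mul_le_mul_of_nonneg_right (by linarith) (hq.nonneg n)
  · intro n hn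
    calc ∑ k ∈ range n₀, q (n - k) ≤ ∑ k ∈ range n₀, θ ^ n₀ * q n :=
          sum_le_sum fun k hk => by
            have := mem_range.1 hk
            exact hshift (by omega) (by omega) (by omega) (by omega)
      _ = n₀ * θ ^ n₀ * q n := by rw [sum_const, card_range, nsmul_eq_mul, mul_assoc]
      _ ≤ G * q n := by
          gcongr
          · exact hq.nonneg n
          exact le_add_of_nonneg_right (sum_nonneg fun k _ => inv_nonneg.2 (hq.nonneg k))
  · intro n hn hn'
    have hqn := (hN₁ n (by omega)).1
    calc 1 = (q n)⁻¹ * q n := (inv_mul_cancel₀ hqn.ne').symm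
      _ ≤ G * q n := by
          gcongr
          refine le_add_of_nonneg_of_le (by positivity) ?_
          exact single_le_sum (f := fun k => (q k)⁻¹) (fun k _ => inv_nonneg.2 (hq.nonneg k))
            (mem_Ico.2 ⟨hn, hn'⟩)

theorem exists_convPow_shift_le (hq : IsSubexpDistrib q) (m : ℕ)
    {δ : ℝ} (hδ : 0 < δ) :
    ∃ A, 0 < A ∧ ∃ N₀ : ℕ, ∀ p r Nt s : ℕ, N₀ ≤ Nt → s + r = Nt + p * m →
      convPow q p s ≤ A * (1 + δ) ^ (p + r) * q (Nt + m) := by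
  -- `b = √(1 + δ)` leaves room for the factor `θ ^ (m * p) ≤ b ^ p` lost in the shift.
  set b := √(1 + δ)
  have hb : 1 < b := (Real.lt_sqrt zero_le_one).2 (by linarith)
  have hbb : b * b = 1 + δ := Real.mul_self_sqrt (by linarith)
  obtain ⟨B, hB, n₀, hconv⟩ := hq.exists_convPow_le hb
  obtain ⟨θ, hθ, hθm⟩ := exists_one_lt_pow_le hb (m + 1)
  obtain ⟨N₁, hN₁⟩ := eventually_atTop.1 (hq.eventually_ratio_le hθ)
  obtain ⟨N₂, hN₂⟩ := eventually_atTop.1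
    ((hq.tendsto_pow_mul_atTop (a := 1 + δ) (by linarith)).eventually_ge_atTop 1)
  set n₂ := n₀ + N₁
  refine ⟨max (B * θ ^ m) ((1 + δ) ^ (n₂ + m)), lt_max_of_lt_right (by positivity), N₁ + N₂,
    fun p r Nt s hNt hs => ?_⟩
  by_cases hs₂ : n₂ ≤ s
  · have hθb : θ ^ m ≤ b := (pow_le_pow_right₀ hθ.le (by omega)).trans hθm
    have hθδ : θ ≤ 1 + δ := calc
      θ ≤ θ ^ (m + 1) := le_self_pow₀ hθ.le (by omega)
      _ ≤ b := hθm
      _ ≤ b * b := le_mul_of_one_le_right (by linarith) hb.le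
      _ = 1 + δ := hbb
    have hshift : q s ≤ θ ^ (m * p + m + r) * q (Nt + m) :=
      le_pow_mul_of_ratio_le hθ.le hq.nonneg (fun k hk => (hN₁ k hk).2) (by omega) (by omega)
        (by nlinarith) (by nlinarith)
    calc convPow q p s ≤ B * b ^ p * q s := hconv p s (by omega)
      _ ≤ B * b ^ p * (θ ^ (m * p + m + r) * q (Nt + m)) := by gcongr
      _ = B * θ ^ m * (b * θ ^ m) ^ p * θ ^ r * q (Nt + m) := by ring
      _ ≤ max (B * θ ^ m) ((1 + δ) ^ (n₂ + m)) * (b * b) ^ p * (1 + δ) ^ r * q (Nt + m) := by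
          gcongr
          exacts [hq.nonneg _, le_max_left _ _]
      _ = _ := by rw [hbb, pow_add]; ring
  · have hNt' : Nt + m ≤ n₂ + m + (p + r) := by nlinarith
    calc convPow q p s ≤ 1 := convPow_le_one hq.nonneg hq.sum_range_le_one p s
      _ ≤ (1 + δ) ^ (Nt + m) * q (Nt + m) := hN₂ _ (by omega)
      _ ≤ (1 + δ) ^ (n₂ + m) * (1 + δ) ^ (p + r) * q (Nt + m) := by
          rw [← pow_add]
          gcongr
          exacts [hq.nonneg _, by linarith]
      _ ≤ _ := by
          gcongr
          exacts [hq.nonneg _, le_max_right _ _]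

end IsSubexpDistrib

theorem IsSubexp.isSubexpDistrib {c : ℕ → ℝ} {ρ : ℝ} (hc : IsSubexp c ρ) (hρ : 0 < ρ) :
    IsSubexpDistrib fun k => c k * ρ ^ k / Ct c ρ := by
  obtain ⟨hc0, -, ⟨K, hK⟩, hsum, hratio, hconv⟩ := hc
  have hC : 0 < Ct c ρ := (mul_pos (hK K le_rfl) (pow_pos hρ K)).trans_le
    (hsum.le_tsum K fun k _ => mul_nonneg (hc0 k) (pow_pos hρ k).le)
  refine ⟨fun k => div_nonneg (mul_nonneg (hc0 k) (pow_pos hρ k).le) hC.le, ?_,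
    eventually_atTop.2 ⟨K, fun n hn => div_pos (mul_pos (hK n hn) (pow_pos hρ n)) hC⟩, ?_, ?_⟩
  · have h : HasSum _ (Ct c ρ / Ct c ρ) := hsum.hasSum.div_const (Ct c ρ)
    rwa [div_self hC.ne'] at h
  · have h := (hratio.comp (tendsto_add_atTop_nat 1)).div_const ρ
    simp only [Function.comp_def, Nat.add_sub_cancel, div_self hρ.ne'] at h
    refine h.congr' (eventually_atTop.2 ⟨K, fun n hn => ?_⟩)
    have := (hK (n + 1) (by omega)).ne'
    field_simp
    ring
  · have h := hconv.div_const (Ct c ρ)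
    rw [mul_div_assoc, div_self hC.ne', mul_one] at h
    refine h.congr' (eventually_atTop.2 ⟨K, fun n hn => ?_⟩)
    have hsum_eq : ∑ k ∈ range (n + 1), c k * ρ ^ k / Ct c ρ * (c (n - k) * ρ ^ (n - k) / Ct c ρ)
        = (∑ k ∈ range (n + 1), c k * c (n - k)) * ρ ^ n / Ct c ρ ^ 2 := by
      rw [sum_mul, sum_div]
      refine sum_congr rfl fun k hk => ?_
      rw [← pow_mul_pow_sub ρ (Nat.le_of_lt_succ (mem_range.1 hk))]
      ring
    have := (hK n hn).ne'
    dsimp only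
    rw [hsum_eq]
    field_simp

section law

open ProbabilityTheory

variable {Ω : Type*} [MeasurableSpace Ω] {μ : Measure Ω}

theorem ProbabilityTheory.IndepFun.measure_add_eq_sum {S Y : Ω → ℕ} (hS : Measurable S)
    (hY : Measurable Y) (h : IndepFun S Y μ) (n : ℕ) :
    μ {ω | S ω + Y ω = n} = ∑ k ∈ range (n + 1), μ (S ⁻¹' {k}) * μ (Y ⁻¹' {n - k}) := by
  have hunion : {ω | S ω + Y ω = n} = ⋃ k ∈ range (n + 1), S ⁻¹' {k} ∩ Y ⁻¹' {n - k} := by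
    ext ω
    simp only [Set.mem_ofPred_eq, Set.mem_iUnion, Set.mem_inter_iff, Set.mem_preimage,
      Set.mem_singleton_iff, mem_range, exists_prop]
    constructor
    · rintro rfl
      exact ⟨S ω, by omega, rfl, by omega⟩
    · rintro ⟨k, hk, rfl, hY⟩
      omega
  rw [hunion, measure_biUnion_finset]
  · exact sum_congr rfl fun k _ =>
      h.measure_inter_preimage_eq_mul _ _ (measurableSet_singleton _) (measurableSet_singleton _)
  · exact fun a _ b _ hab => Set.disjoint_left.2 fun ω h₁ h₂ => hab (h₁.1.symm.trans h₂.1)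
  · exact fun k _ => (hS (measurableSet_singleton _)).inter (hY (measurableSet_singleton _))

theorem measure_sum_range_eq_convPow [IsProbabilityMeasure μ] {X : ℕ → Ω → ℕ}
    (hX : ∀ i, Measurable (X i)) (hindep : iIndepFun X μ) {q : ℕ → ℝ} (hq : ∀ k, 0 ≤ q k)
    (hlaw : ∀ i k, μ {ω | X i ω = k} = ENNReal.ofReal (q k)) (p n : ℕ) :
    μ {ω | ∑ i ∈ range p, X i ω = n} = ENNReal.ofReal (convPow q p n) := by
  induction p generalizing n with
  | zero => rcases eq_or_ne n 0 with rfl | hn <;> simp [convPow, *, eq_comm]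
  | succ p ih =>
    have hS : Measurable fun ω => ∑ i ∈ range p, X i ω := Finset.measurable_sum _ fun i _ => hX i
    have hindep' : IndepFun (fun ω => ∑ i ∈ range p, X i ω) (X p) μ := by
      simpa only [← Finset.sum_apply] using hindep.indepFun_sum_range_succ hX p
    simp only [sum_range_succ]
    rw [hindep'.measure_add_eq_sum hS (hX p), convPow,
      ENNReal.ofReal_sum_of_nonneg fun k _ => mul_nonneg (convPow_nonneg hq p k) (hq _)]
    exact sum_congr rfl fun k _ => by
      rw [ENNReal.ofReal_mul (convPow_nonneg hq p k), ← ih, ← hlaw p]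
      rfl

end law

lemma sum_sub_eq_sub_iff (x : ℕ → ℕ) (p m N r : ℕ) :
    ∑ i ∈ range p, ((x i : ℤ) - m) = (N : ℤ) - r ↔ ∑ i ∈ range p, x i + r = N + p * m := by
  rw [sum_sub_distrib, ← Nat.cast_sum, sum_const, card_range, nsmul_eq_mul]
  omega

theorem statement17_general
    (c : ℕ → ℝ)
    (ρ : ℝ) (hρ0 : 0 < ρ)
    (hsub : IsSubexp c ρ)
    (m : ℕ)
    {Ω : Type*} [MeasurableSpace Ω] (μ : Measure Ω) [IsProbabilityMeasure μ]
    (X : ℕ → Ω → ℕ)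
    (hmeas : ∀ i, Measurable (X i))
    (hindep : ProbabilityTheory.iIndepFun X μ)
    (hdist : ∀ i k : ℕ, μ {ω | X i ω = k} =
      ENNReal.ofReal (if 1 ≤ k then c k * ρ ^ k / Ct c ρ else 0)) :
    ∀ δ : ℝ, 0 < δ → ∃ A : ℝ, 0 < A ∧ ∃ N₀ : ℕ, ∀ p r : ℕ, ∀ Nt : ℕ, N₀ ≤ Nt →
      (μ {ω | ∑ i ∈ Finset.range p, ((X i ω : ℤ) - m) = (Nt : ℤ) - r}).toReal ≤
        A * (1 + δ) ^ (p + r) * (μ {ω | X 0 ω = Nt + m}).toReal := by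
  intro δ hδ
  set q : ℕ → ℝ := fun k => c k * ρ ^ k / Ct c ρ
  have hq : IsSubexpDistrib q := hsub.isSubexpDistrib hρ0
  have hlaw : ∀ i k, μ {ω | X i ω = k} = ENNReal.ofReal (q k) := by
    rintro i (_ | k)
    · simp [hdist, q, hsub.2.1]
    · simp [hdist, q]
  obtain ⟨A, hA, N₀, hbound⟩ := hq.exists_convPow_shift_le m hδ
  refine ⟨A, hA, N₀, fun p r Nt hNt => ?_⟩
  simp only [sum_sub_eq_sub_iff]
  rw [hlaw, ENNReal.toReal_ofReal (hq.nonneg _)]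
  by_cases hr : r ≤ Nt + p * m
  · have hevent : {ω | ∑ i ∈ range p, X i ω + r = Nt + p * m}
        = {ω | ∑ i ∈ range p, X i ω = Nt + p * m - r} := by
      ext ω
      simp only [Set.mem_ofPred_eq]
      omega
    rw [hevent, measure_sum_range_eq_convPow hmeas hindep hq.nonneg hlaw,
      ENNReal.toReal_ofReal (convPow_nonneg hq.nonneg _ _)]
    exact hbound p r Nt _ hNt (Nat.sub_add_cancel hr)
  · have hevent : {ω | ∑ i ∈ range p, X i ω + r = Nt + p * m} = ∅ :=
      Set.eq_empty_of_forall_notMem fun ω (h : _ = _) => hr (by omega)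
    rw [hevent, measure_empty, ENNReal.toReal_zero]
    exact mul_nonneg (by positivity) (hq.nonneg _)

/-- Uniform Kesten-type bound: if `(c_k)` is subexponential with radius of
convergence `ρ` and `(X_i)` are iid with `P(X_1 = k) = c_k ρ^k / C(ρ)`, then for every
`δ > 0` there are `A > 0` and `N₀` such that for all `p, r ∈ ℕ` and all `Nt ≥ N₀`,
`P(∑_{i=1}^p (X_i - m) = Nt - r) ≤ A (1+δ)^{p+r} P(X_1 = Nt + m)`. -/
theorem statement17
    (c : ℕ → ℝ)
    (ρ : ℝ) (hρ0 : 0 < ρ)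
    (hsub : IsSubexp c ρ)
    (m : ℕ) (hm : m = sInf {k | 0 < c k})
    {Ω : Type*} [MeasurableSpace Ω] (μ : Measure Ω) [IsProbabilityMeasure μ]
    (X : ℕ → Ω → ℕ)
    (hmeas : ∀ i, Measurable (X i))
    (hindep : ProbabilityTheory.iIndepFun X μ)
    (hdist : ∀ i k : ℕ, μ {ω | X i ω = k} =
      ENNReal.ofReal (if 1 ≤ k then c k * ρ ^ k / Ct c ρ else 0)) :
    ∀ δ : ℝ, 0 < δ → ∃ A : ℝ, 0 < A ∧ ∃ N₀ : ℕ, ∀ p r : ℕ, ∀ Nt : ℕ, N₀ ≤ Nt →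
      (μ {ω | ∑ i ∈ Finset.range p, ((X i ω : ℤ) - m) = (Nt : ℤ) - r}).toReal ≤
        A * (1 + δ) ^ (p + r) * (μ {ω | X 0 ω = Nt + m}).toReal :=
  statement17_general c ρ hρ0 hsub m μ X hmeas hindep hdist
end
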